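/- For any graph G, the set Short(𝒞(G)) of short characteristic covectors of the cut lattice consists precisely of the orientation covectors for 𝒞(G): a characteristic covector χ for 𝒞(G) is short if and only if χ is the restriction to 𝒞(G) of χ_𝒪 for some orientation 𝒪 of G. -/

import Mathlib

set_option linter.unusedSectionVars false

open Matrix BigOperators

namespace Greene

/-- A rational number is an integer. -/
def isInt (q : ℚ) : Prop := ∃ m : ℤ, q = (m : ℚ)

section LatticeDefs

variable {ι : Type} [Fintype ι] [DecidableEq ι]
variable {ι' : Type} [Fintype ι'] [DecidableEq ι']

/-- The bilinear form on `ι → ℚ` with (integral) Gram matrix `B`. -/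
def qform (B : Matrix ι ι ℤ) (x y : ι → ℚ) : ℚ :=
  x ⬝ᵥ ((B.map (Int.cast : ℤ → ℚ)) *ᵥ y)

/-- The set of integer vectors: the standard lattice inside `ι → ℚ`. -/
def intVecs (ι : Type) [Fintype ι] [DecidableEq ι] : Set (ι → ℚ) :=
  {x | ∀ i, isInt (x i)}

lemma qform_zero_left (B : Matrix ι ι ℤ) (y : ι → ℚ) : qform B 0 y = 0 :=
  zero_dotProduct _

lemma qform_add_left (B : Matrix ι ι ℤ) (x x' y : ι → ℚ) :
    qform B (x + x') y = qform B x y + qform B x' y := add_dotProduct _ _ _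

lemma qform_neg_left (B : Matrix ι ι ℤ) (x y : ι → ℚ) :
    qform B (-x) y = -qform B x y := neg_dotProduct _ _

/-- The dual lattice `S* = {x ∈ span_ℚ S | ⟨x,y⟩ ∈ ℤ for all y ∈ S}`. -/
def dualOf (B : Matrix ι ι ℤ) (S : Set (ι → ℚ)) : AddSubgroup (ι → ℚ) where
  carrier := {x | x ∈ Submodule.span ℚ S ∧ ∀ y ∈ S, isInt (qform B x y)}
  zero_mem' := ⟨Submodule.zero_mem _, fun y _ => ⟨0, by simp [qform_zero_left]⟩⟩
  add_mem' := by
    intro a b ha hb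
    refine ⟨Submodule.add_mem _ ha.1 hb.1, fun y hy => ?_⟩
    obtain ⟨m, hm⟩ := ha.2 y hy
    obtain ⟨m', hm'⟩ := hb.2 y hy
    exact ⟨m + m', by rw [qform_add_left, hm, hm']; push_cast; ring⟩
  neg_mem' := by
    intro a ha
    refine ⟨Submodule.neg_mem _ ha.1, fun y hy => ?_⟩
    obtain ⟨m, hm⟩ := ha.2 y hy
    exact ⟨-m, by rw [qform_neg_left, hm]; push_cast; ring⟩

/-- Characteristic covectors: `χ ∈ S*` with `⟨χ,y⟩ ≡ ⟨y,y⟩ (mod 2)` for all `y ∈ S`. -/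
def CharOf (B : Matrix ι ι ℤ) (S : Set (ι → ℚ)) : Set (ι → ℚ) :=
  {χ | χ ∈ dualOf B S ∧ ∀ y ∈ S, ∃ m : ℤ, qform B χ y - qform B y y = 2 * (m : ℚ)}

/-- Two covectors are in the same class mod `2S`. -/
def SameClass (S : Set (ι → ℚ)) (χ χ' : ι → ℚ) : Prop :=
  ∃ y ∈ S, χ' = χ + (2 : ℚ) • y

/-- Short characteristic covectors: minimal norm in their class mod `2S`. -/
def ShortOf (B : Matrix ι ι ℤ) (S : Set (ι → ℚ)) : Set (ι → ℚ) :=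
  {χ | χ ∈ CharOf B S ∧ ∀ χ' ∈ CharOf B S, SameClass S χ χ' → qform B χ χ ≤ qform B χ' χ'}

/-- Rank of a lattice: dimension of its rational span. -/
noncomputable def rkOf (S : Set (ι → ℚ)) : ℕ := Module.finrank ℚ (Submodule.span ℚ S)

/-- The lattice `S` sitting inside its dual. -/
def latIn (B : Matrix ι ι ℤ) (S : Set (ι → ℚ)) : AddSubgroup (dualOf B S) :=
  AddSubgroup.closure {x | (x : ι → ℚ) ∈ S}

/-- The discriminant group `S*/S`. -/
def disc (B : Matrix ι ι ℤ) (S : Set (ι → ℚ)) : Type :=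
  dualOf B S ⧸ latIn B S

noncomputable instance (B : Matrix ι ι ℤ) (S : Set (ι → ℚ)) : AddCommGroup (disc B S) :=
  inferInstanceAs (AddCommGroup (dualOf B S ⧸ latIn B S))

/-- The class of a dual vector in the discriminant group. -/
def dmk (B : Matrix ι ι ℤ) (S : Set (ι → ℚ)) {x : ι → ℚ} (hx : x ∈ dualOf B S) :
    disc B S := QuotientAddGroup.mk (⟨x, hx⟩ : dualOf B S)

/-- `S` is an additive subgroup (a sublattice, when contained in a lattice). -/
def IsLat (S : Set (ι → ℚ)) : Prop :=
  (0 : ι → ℚ) ∈ S ∧ ∀ x ∈ S, ∀ y ∈ S, x - y ∈ S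

/-- The form is integer valued on `S`. -/
def IntegralOn (B : Matrix ι ι ℤ) (S : Set (ι → ℚ)) : Prop :=
  ∀ x ∈ S, ∀ y ∈ S, isInt (qform B x y)

/-- Unimodularity: the dual lattice equals the lattice. -/
def UnimodularOn (B : Matrix ι ι ℤ) (S : Set (ι → ℚ)) : Prop :=
  ((dualOf B S : AddSubgroup (ι → ℚ)) : Set (ι → ℚ)) = S

/-- Positive definiteness of the form on the span of `S`. -/
def PosDefOn (B : Matrix ι ι ℤ) (S : Set (ι → ℚ)) : Prop :=
  ∀ x ∈ Submodule.span ℚ S, x ≠ 0 → 0 < qform B x x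

/-- Orthogonality of two sublattices. -/
def OrthogonalSets (B : Matrix ι ι ℤ) (S T : Set (ι → ℚ)) : Prop :=
  ∀ x ∈ S, ∀ y ∈ T, qform B x y = 0

/-- `S, T` are complementary sublattices of `L`: orthogonal with ranks summing to `rk L`. -/
noncomputable def ComplementaryIn (B : Matrix ι ι ℤ) (L S T : Set (ι → ℚ)) : Prop :=
  OrthogonalSets B S T ∧ rkOf S + rkOf T = rkOf L

/-- `S ⊆ L` is a primitive sublattice: the restriction map `L* → S*` surjects. -/
def PrimitiveIn (B : Matrix ι ι ℤ) (L S : Set (ι → ℚ)) : Prop :=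
  ∀ x ∈ dualOf B S, ∃ z ∈ dualOf B L, ∀ u ∈ S, qform B z u = qform B x u

/-- `s` is the signature of the form restricted to the span of `S` (Sylvester form). -/
def IsSignatureOf (B : Matrix ι ι ℤ) (S : Set (ι → ℚ)) (s : ℤ) : Prop :=
  ∃ (p q : ℕ) (v : Fin (p + q) → (ι → ℚ)),
    (∀ i, v i ∈ Submodule.span ℚ S) ∧
    Submodule.span ℚ (Set.range v) = Submodule.span ℚ S ∧
    LinearIndependent ℚ v ∧
    (∀ i j, i ≠ j → qform B (v i) (v j) = 0) ∧
    (∀ i : Fin (p + q),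
      if (i : ℕ) < p then 0 < qform B (v i) (v i) else qform B (v i) (v i) < 0) ∧
    s = (p : ℤ) - (q : ℤ)

/-- `S` admits an orthonormal basis of `n` elements, i.e. `S ≅ ℤⁿ`. -/
def HasOrthonormalBasis (B : Matrix ι ι ℤ) (S : Set (ι → ℚ)) (n : ℕ) : Prop :=
  ∃ v : Fin n → (ι → ℚ), (∀ i, v i ∈ S) ∧
    (∀ i j, qform B (v i) (v j) = if i = j then 1 else 0) ∧
    (∀ x ∈ S, ∃ c : Fin n → ℤ, x = ∑ i, (c i : ℚ) • v i)

/-- Isomorphism of lattices: an additive bijection preserving the forms. -/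
def LatIso (B : Matrix ι ι ℤ) (S : Set (ι → ℚ)) (B' : Matrix ι' ι' ℤ) (S' : Set (ι' → ℚ)) :
    Prop :=
  ∃ f : (ι → ℚ) → (ι' → ℚ), Set.BijOn f S S' ∧
    (∀ x ∈ S, ∀ y ∈ S, f (x + y) = f x + f y) ∧
    (∀ x ∈ S, ∀ y ∈ S, qform B' (f x) (f y) = qform B x y)

/-- An isomorphism of the torsors `C(S₁) → C(S₂)` (given on representatives by `Φ`),
covering the group isomorphism `ψ` of discriminant groups. -/
def TorsorMapIso (B₁ : Matrix ι ι ℤ) (S₁ : Set (ι → ℚ))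
    (B₂ : Matrix ι' ι' ℤ) (S₂ : Set (ι' → ℚ))
    (Φ : (ι → ℚ) → (ι' → ℚ)) (ψ : disc B₁ S₁ ≃+ disc B₂ S₂) : Prop :=
  (∀ χ ∈ CharOf B₁ S₁, Φ χ ∈ CharOf B₂ S₂) ∧
  (∀ χ ∈ CharOf B₁ S₁, ∀ χ' ∈ CharOf B₁ S₁,
    (SameClass S₁ χ χ' ↔ SameClass S₂ (Φ χ) (Φ χ'))) ∧
  (∀ μ ∈ CharOf B₂ S₂, ∃ χ ∈ CharOf B₁ S₁, SameClass S₂ (Φ χ) μ) ∧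
  (∀ χ ∈ CharOf B₁ S₁, ∀ χ' ∈ CharOf B₁ S₁,
    ∀ (x : ι → ℚ) (y : ι' → ℚ) (hx : x ∈ dualOf B₁ S₁) (hy : y ∈ dualOf B₂ S₂),
      χ' = χ + (2 : ℚ) • x → Φ χ' = Φ χ + (2 : ℚ) • y →
      ψ (dmk B₁ S₁ hx) = dmk B₂ S₂ hy)

/-- Compatibility of `Φ` with the `d`-invariants: `d₂([Φ χ]) = ε · d₁([χ])`,
where `d` is the minimum of `(|χ'|² - rk)/4` over the class. -/
noncomputable def DCompat (B₁ : Matrix ι ι ℤ) (S₁ : Set (ι → ℚ))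
    (B₂ : Matrix ι' ι' ℤ) (S₂ : Set (ι' → ℚ))
    (ε : ℚ) (Φ : (ι → ℚ) → (ι' → ℚ)) : Prop :=
  ∀ χ ∈ CharOf B₁ S₁, ∀ q : ℚ,
    IsLeast {t | ∃ χ' ∈ CharOf B₁ S₁, SameClass S₁ χ χ' ∧
      t = (qform B₁ χ' χ' - (rkOf S₁ : ℚ)) / 4} q →
    IsLeast {t | ∃ μ ∈ CharOf B₂ S₂, SameClass S₂ (Φ χ) μ ∧
      t = (qform B₂ μ μ - (rkOf S₂ : ℚ)) / 4} (ε * q)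

/-- Compatibility of `Φ` with the `ρ`-invariants: `ρ₂([Φ χ]) ≡ ε · ρ₁([χ]) (mod 2)`. -/
def RhoCompat (B₁ : Matrix ι ι ℤ) (S₁ : Set (ι → ℚ))
    (B₂ : Matrix ι' ι' ℤ) (S₂ : Set (ι' → ℚ))
    (ε : ℚ) (Φ : (ι → ℚ) → (ι' → ℚ)) : Prop :=
  ∀ χ ∈ CharOf B₁ S₁, ∀ s₁ s₂ : ℤ, IsSignatureOf B₁ S₁ s₁ → IsSignatureOf B₂ S₂ s₂ →
    ∃ m : ℤ, (qform B₂ (Φ χ) (Φ χ) - (s₂ : ℚ)) / 4 - ε * ((qform B₁ χ χ - (s₁ : ℚ)) / 4)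
      = 2 * (m : ℚ)

/-- The `d`-invariants `(C(S₁), d₁)` and `(C(S₂), ε·d₂)` are isomorphic. -/
noncomputable def DIso (B₁ : Matrix ι ι ℤ) (S₁ : Set (ι → ℚ))
    (B₂ : Matrix ι' ι' ℤ) (S₂ : Set (ι' → ℚ)) (ε : ℚ) : Prop :=
  ∃ (Φ : (ι → ℚ) → (ι' → ℚ)) (ψ : disc B₁ S₁ ≃+ disc B₂ S₂),
    TorsorMapIso B₁ S₁ B₂ S₂ Φ ψ ∧ DCompat B₁ S₁ B₂ S₂ ε Φ

end LatticeDefs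

/-- An abstract integral lattice, presented by its Gram matrix. -/
structure IntLattice where
  n : ℕ
  B : Matrix (Fin n) (Fin n) ℤ
  symm : B.IsSymm
  nondeg : B.det ≠ 0

/-- The Gram matrix of the orthogonal direct sum `Λ₁ ⊥ Λ₂`. -/
def glueGram (L₁ L₂ : IntLattice) :
    Matrix (Fin L₁.n ⊕ Fin L₂.n) (Fin L₁.n ⊕ Fin L₂.n) ℤ :=
  Matrix.fromBlocks L₁.B 0 0 L₂.B

/-- The glue lattice `Λ₁ ⊕_ψ Λ₂ = {x + y ∈ Λ₁* ⊕ Λ₂* : ψ(x̄) = ȳ}`. -/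
def glueSet (L₁ L₂ : IntLattice)
    (ψ : disc L₁.B (intVecs (Fin L₁.n)) ≃+ disc L₂.B (intVecs (Fin L₂.n))) :
    Set (Fin L₁.n ⊕ Fin L₂.n → ℚ) :=
  {w | ∃ (h₁ : (w ∘ Sum.inl) ∈ dualOf L₁.B (intVecs (Fin L₁.n)))
        (h₂ : (w ∘ Sum.inr) ∈ dualOf L₂.B (intVecs (Fin L₂.n))),
        ψ (dmk _ _ h₁) = dmk _ _ h₂}

/-- `Λ₁` embedded in the first factor of `Λ₁* ⊕ Λ₂*`. -/
def inlLat (L₁ L₂ : IntLattice) : Set (Fin L₁.n ⊕ Fin L₂.n → ℚ) :=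
  {w | (w ∘ Sum.inl) ∈ intVecs (Fin L₁.n) ∧ w ∘ Sum.inr = 0}

/-- `Λ₂` embedded in the second factor of `Λ₁* ⊕ Λ₂*`. -/
def inrLat (L₁ L₂ : IntLattice) : Set (Fin L₁.n ⊕ Fin L₂.n → ℚ) :=
  {w | (w ∘ Sum.inr) ∈ intVecs (Fin L₂.n) ∧ w ∘ Sum.inl = 0}

/-- Stabilization `S ⊕ ℤᵏ`. -/
def stabSet {ι : Type} [Fintype ι] [DecidableEq ι] (S : Set (ι → ℚ)) (k : ℕ) :
    Set (ι ⊕ Fin k → ℚ) :=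
  {w | (w ∘ Sum.inl) ∈ S ∧ ∀ j, isInt (w (Sum.inr j))}

/-- A finite loopless multigraph, with a reference orientation of each edge. -/
structure MultiGraph where
  nV : ℕ
  nE : ℕ
  hd : Fin nE → Fin nV
  tl : Fin nE → Fin nV
  loopless : ∀ e, hd e ≠ tl e

namespace MultiGraph

/-- The boundary map `C₁(G;ℚ) → C₀(G;ℚ)`, `∂ e = head(e) − tail(e)`. -/
def bndry (G : MultiGraph) (x : Fin G.nE → ℚ) : Fin G.nV → ℚ :=
  fun v => ∑ e, x e * ((if G.hd e = v then 1 else 0) - (if G.tl e = v then 1 else 0))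

/-- The flow lattice `ℱ(G) = ker ∂ ∩ C₁(G;ℤ)`. -/
def flowSet (G : MultiGraph) : Set (Fin G.nE → ℚ) :=
  {x | (∀ e, isInt (x e)) ∧ G.bndry x = 0}

/-- The cut lattice `𝒞(G) = im ∂* ∩ C₁(G;ℤ)`. -/
def cutSet (G : MultiGraph) : Set (Fin G.nE → ℚ) :=
  {x | (∀ e, isInt (x e)) ∧ ∃ g : Fin G.nV → ℚ, ∀ e, x e = g (G.hd e) - g (G.tl e)}

/-- Reachability using only edges from the set `A`. -/
def ReachIn (G : MultiGraph) (A : Set (Fin G.nE)) : Fin G.nV → Fin G.nV → Prop :=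
  Relation.ReflTransGen
    (fun u v => ∃ e ∈ A, (G.hd e = u ∧ G.tl e = v) ∨ (G.hd e = v ∧ G.tl e = u))

def Connected (G : MultiGraph) : Prop := ∀ u v, G.ReachIn Set.univ u v

/-- 2-edge-connectedness: connected, and removing any one edge leaves it connected. -/
def TwoEdgeConnected (G : MultiGraph) : Prop :=
  G.Connected ∧ ∀ e : Fin G.nE, ∀ u v, G.ReachIn {e}ᶜ u v

/-- `C` is the edge set of a cycle of `G`. -/
def IsCycleEdgeSet (G : MultiGraph) (C : Set (Fin G.nE)) : Prop :=
  ∃ k : ℕ, 0 < k ∧ ∃ (e : Fin k → Fin G.nE) (v : Fin k → Fin G.nV),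
    Function.Injective e ∧ Function.Injective v ∧ C = Set.range e ∧
    ∀ i, (G.hd (e i) = v (finRotate k i) ∧ G.tl (e i) = v i) ∨
         (G.tl (e i) = v (finRotate k i) ∧ G.hd (e i) = v i)

/-- A maximal spanning forest: acyclic and realizing all of `G`'s reachability. -/
def IsMaxForest (G : MultiGraph) (F : Finset (Fin G.nE)) : Prop :=
  (∀ C, G.IsCycleEdgeSet C → ¬(C ⊆ (↑F : Set (Fin G.nE)))) ∧
  ∀ u v, G.ReachIn Set.univ u v → G.ReachIn (↑F) u v

open Classical in
/-- The fundamental cut vector of `e ∈ F`: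
`+1` on edges leaving the component `K₁` of the tail of `e` in `F − e`,
`−1` on edges entering it, `0` otherwise. -/
noncomputable def cutVec (G : MultiGraph) (F : Finset (Fin G.nE)) (e : Fin G.nE) :
    Fin G.nE → ℚ := fun j =>
  (if G.ReachIn (↑(F.erase e)) (G.tl j) (G.tl e) then 1 else 0)
    - (if G.ReachIn (↑(F.erase e)) (G.hd j) (G.tl e) then 1 else 0)

/-- `x` is the fundamental cycle vector of `e ∉ F`: the unique flow supported on
`F ∪ {e}` whose coefficient on `e` is `+1`. -/
def IsFundCycleVec (G : MultiGraph) (F : Finset (Fin G.nE)) (e : Fin G.nE)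
    (x : Fin G.nE → ℚ) : Prop :=
  G.bndry x = 0 ∧ (∀ j, j ∉ F → j ≠ e → x j = 0) ∧ x e = 1

/-- Reorienting the edges of `G`: `o e = true` keeps the reference direction. -/
def reorient (G : MultiGraph) (o : Fin G.nE → Bool) : MultiGraph :=
  { G with
    hd := fun e => if o e then G.hd e else G.tl e
    tl := fun e => if o e then G.tl e else G.hd e
    loopless := by
      intro e
      by_cases h : o e = true
      · simpa [h] using G.loopless e
      · simpa [h] using (G.loopless e).symm }

end MultiGraph

/-- A 2-isomorphism: a bijection of edge sets preserving edge sets of cycles. -/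
def TwoIsomorphic (G G' : MultiGraph) : Prop :=
  ∃ σ : Fin G.nE ≃ Fin G'.nE, ∀ C, G.IsCycleEdgeSet C ↔ G'.IsCycleEdgeSet (σ '' C)

/-!
Since `|χ + 2y| = |χ| + 4 (⟨χ, y⟩ + |y|)`, a characteristic covector `χ` of the cut lattice is
short iff `⟨χ, y⟩ + |y| ≥ 0` for every cut `y`. On cuts `χ` is determined by `∂χ`, equivalently by
`inflow χ = (∂χ + deg) / 2`, which for an orientation covector is its in-degree sequence.
For the cut `y = ∂* 1_R` of a vertex set `R`, `(⟨χ, y⟩ + |y|) / 2 = ∑_{v ∈ R} inflow χ v - e(R)`,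
where `e(R)` counts the edges with both ends in `R`: characteristicity makes it an integer and
shortness makes it non-negative. These are Hall's conditions for assigning to each edge one of
its endpoints so that `v` receives `inflow χ v` edges (Hakimi's theorem), i.e. for an orientation
with the same covector. Conversely, for an orientation `s`, `⟨s, y⟩ + |y| = ∑ y_e (y_e + s_e) ≥ 0`
on integer vectors.
-/

open Finset

theorem exists_orientation_inDegree_eq {E V : Type*} [Fintype E] [Fintype V] [DecidableEq V]
    (hd tl : E → V) (d : V → ℕ) (hsum : ∑ v, d v = Fintype.card E)
    (hall : ∀ R : Finset V, #{e | hd e ∈ R ∧ tl e ∈ R} ≤ ∑ v ∈ R, d v) :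
    ∃ o : E → V, (∀ e, o e = hd e ∨ o e = tl e) ∧ ∀ v, #{e | o e = v} = d v := by
  -- Hall's theorem, matching each edge to one of the `d v` slots of one of its endpoints
  let slots : E → Finset (Σ v, Fin (d v)) := fun e => ({hd e, tl e} : Finset V).sigma fun _ => univ
  have hslots : ∀ F : Finset E, #F ≤ #(F.biUnion slots) := by
    intro F
    set R := F.biUnion fun e => ({hd e, tl e} : Finset V)
    have hF : F.biUnion slots = R.sigma fun _ => univ := by
      ext x; simp [slots, R]
    have hsub : F ⊆ ({e | hd e ∈ R ∧ tl e ∈ R} : Finset E) := by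
      intro e he
      simp only [mem_filter, mem_univ, true_and, R, mem_biUnion]
      exact ⟨⟨e, he, by simp⟩, ⟨e, he, by simp⟩⟩
    calc #F ≤ #{e | hd e ∈ R ∧ tl e ∈ R} := card_le_card hsub
      _ ≤ ∑ v ∈ R, d v := hall R
      _ = #(F.biUnion slots) := by simp [hF, card_sigma]
  obtain ⟨f, hf_inj, hf_mem⟩ := (all_card_le_biUnion_card_iff_exists_injective slots).1 hslots
  refine ⟨fun e => (f e).1, fun e => by simpa [slots] using hf_mem e, ?_⟩
  have hle : ∀ v ∈ univ, #{e | (f e).1 = v} ≤ d v := fun v _ =>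
    calc #{e | (f e).1 = v} ≤ #(({v} : Finset V).sigma fun w => (univ : Finset (Fin (d w)))) :=
          card_le_card_of_injOn f (fun e he => by simpa using he) hf_inj.injOn
      _ = d v := by simp [card_sigma]
  have htotal : ∑ v, #{e | (f e).1 = v} = ∑ v, d v := by
    rw [hsum, ← card_univ]
    exact (card_eq_sum_card_fiberwise fun e _ => mem_univ _).symm
  exact fun v => (sum_eq_sum_iff_of_le hle).1 htotal v (mem_univ v)

lemma isInt_iff_mem_range {q : ℚ} : isInt q ↔ q ∈ (Int.castRingHom ℚ).range :=
  ⟨fun ⟨m, hm⟩ => ⟨m, hm.symm⟩, fun ⟨m, hm⟩ => ⟨m, hm.symm⟩⟩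

section Lattice

variable {ι : Type} [Fintype ι] [DecidableEq ι] {B : Matrix ι ι ℤ} {S : Set (ι → ℚ)}

lemma qform_add_smul_left (x y z : ι → ℚ) (c : ℚ) :
    qform B (x + c • y) z = qform B x z + c * qform B y z := by
  simp only [qform, add_dotProduct, smul_dotProduct, smul_eq_mul]

lemma qform_add_smul_right (x y z : ι → ℚ) (c : ℚ) :
    qform B x (y + c • z) = qform B x y + c * qform B x z := by
  simp only [qform, mulVec_add, mulVec_smul, dotProduct_add, dotProduct_smul, smul_eq_mul]

lemma qform_comm (hB : B.IsSymm) (x y : ι → ℚ) : qform B x y = qform B y x := by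
  rw [qform, qform, dotProduct_mulVec, ← mulVec_transpose, dotProduct_comm, ← transpose_map,
    hB.eq]

lemma qform_add_two_smul_self (hB : B.IsSymm) (χ y : ι → ℚ) :
    qform B (χ + (2 : ℚ) • y) (χ + (2 : ℚ) • y)
      = qform B χ χ + 4 * (qform B χ y + qform B y y) := by
  rw [qform_add_smul_left, qform_add_smul_right, qform_add_smul_right, qform_comm hB y χ]
  ring

lemma add_two_smul_mem_CharOf (hS : IntegralOn B S) {χ y : ι → ℚ} (hχ : χ ∈ CharOf B S)
    (hy : y ∈ S) : χ + (2 : ℚ) • y ∈ CharOf B S := by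
  obtain ⟨⟨hspan, hdual⟩, hchar⟩ := hχ
  refine ⟨⟨add_mem hspan (Submodule.smul_mem _ _ (Submodule.subset_span hy)), fun u hu => ?_⟩,
    fun u hu => ?_⟩
  · obtain ⟨m, hm⟩ := hdual u hu
    obtain ⟨k, hk⟩ := hS y hy u hu
    exact ⟨m + 2 * k, by rw [qform_add_smul_left, hm, hk]; push_cast; ring⟩
  · obtain ⟨m, hm⟩ := hchar u hu
    obtain ⟨k, hk⟩ := hS y hy u hu
    exact ⟨m + k, by rw [qform_add_smul_left, hk]; push_cast; linarith⟩

lemma mem_ShortOf_iff (hB : B.IsSymm) (hS : IntegralOn B S) {χ : ι → ℚ}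
    (hχ : χ ∈ CharOf B S) :
    χ ∈ ShortOf B S ↔ ∀ y ∈ S, 0 ≤ qform B χ y + qform B y y := by
  constructor
  · intro hshort y hy
    have := hshort.2 _ (add_two_smul_mem_CharOf hS hχ hy) ⟨y, hy, rfl⟩
    rw [qform_add_two_smul_self hB] at this
    linarith
  · intro h
    refine ⟨hχ, ?_⟩
    rintro _ - ⟨y, hy, rfl⟩
    rw [qform_add_two_smul_self hB]
    linarith [h y hy]

lemma CharOf.exists_add_eq_two_mul (hS : IntegralOn B S) {χ y : ι → ℚ}
    (hχ : χ ∈ CharOf B S) (hy : y ∈ S) :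
    ∃ m : ℤ, qform B χ y + qform B y y = 2 * m := by
  obtain ⟨m, hm⟩ := hχ.2 y hy
  obtain ⟨k, hk⟩ := hS y hy y hy
  exact ⟨m + k, by push_cast; linarith⟩

lemma qform_one (x y : ι → ℚ) : qform (1 : Matrix ι ι ℤ) x y = ∑ i, x i * y i := by
  rw [qform, Matrix.map_one _ Int.cast_zero Int.cast_one, one_mulVec]
  rfl

lemma qform_one_sign_add_self_nonneg {s y : ι → ℚ} (hs : ∀ i, s i = 1 ∨ s i = -1)
    (hy : ∀ i, isInt (y i)) :
    0 ≤ qform (1 : Matrix ι ι ℤ) s y + qform (1 : Matrix ι ι ℤ) y y := by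
  rw [qform_one, qform_one, ← sum_add_distrib]
  refine sum_nonneg fun i _ => ?_
  obtain ⟨m, hm⟩ := hy i
  have habs : |(m : ℚ)| ≤ m * m := by
    rw [← sq]; exact_mod_cast (Int.natCast_natAbs m ▸ Int.natAbs_le_self_sq m)
  rcases hs i with h | h <;> rw [h, hm] <;> linarith [le_abs_self (m : ℚ), neg_abs_le (m : ℚ)]

end Lattice

namespace MultiGraph

variable (G : MultiGraph)

def cob (g : Fin G.nV → ℚ) : Fin G.nE → ℚ := fun e => g (G.hd e) - g (G.tl e)

def inflow (x : Fin G.nE → ℚ) (v : Fin G.nV) : ℚ :=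
  ∑ e, ((1 + x e) / 2 * (if G.hd e = v then 1 else 0)
    + (1 - x e) / 2 * (if G.tl e = v then 1 else 0))

variable {G}

lemma cob_mem_cutSet {g : Fin G.nV → ℚ} (hg : ∀ v, isInt (g v)) : G.cob g ∈ G.cutSet := by
  refine ⟨fun e => ?_, g, fun e => rfl⟩
  obtain ⟨a, ha⟩ := hg (G.hd e)
  obtain ⟨b, hb⟩ := hg (G.tl e)
  exact ⟨a - b, by simp [cob, ha, hb]⟩

lemma integralOn_cutSet : IntegralOn (1 : Matrix (Fin G.nE) (Fin G.nE) ℤ) G.cutSet := by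
  intro x hx y hy
  rw [qform_one, isInt_iff_mem_range]
  exact Subring.sum_mem _ fun e _ =>
    mul_mem (isInt_iff_mem_range.1 (hx.1 e)) (isInt_iff_mem_range.1 (hy.1 e))

lemma two_mul_sum_mul_inflow (x : Fin G.nE → ℚ) (g : Fin G.nV → ℚ) :
    2 * ∑ v, g v * G.inflow x v
      = ∑ e, x e * G.cob g e + ∑ e, (g (G.hd e) + g (G.tl e)) := by
  simp only [inflow, mul_sum, cob]
  rw [sum_comm, ← sum_add_distrib]
  refine sum_congr rfl fun e _ => ?_
  simp only [mul_add, sum_add_distrib, mul_ite, mul_one, mul_zero, sum_ite_eq, mem_univ,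
    if_true]
  ring

lemma sum_inflow (x : Fin G.nE → ℚ) : ∑ v, G.inflow x v = G.nE := by
  have h := two_mul_sum_mul_inflow x fun _ => 1
  simp only [cob, sub_self, mul_zero, sum_const_zero, one_mul, zero_add, sum_const, card_univ,
    Fintype.card_fin, nsmul_eq_mul] at h
  linarith

lemma qform_one_eq_of_inflow_eq {x x' : Fin G.nE → ℚ} (h : G.inflow x = G.inflow x') :
    ∀ y ∈ G.cutSet, qform (1 : Matrix (Fin G.nE) (Fin G.nE) ℤ) x y
      = qform (1 : Matrix (Fin G.nE) (Fin G.nE) ℤ) x' y := by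
  rintro y ⟨-, g, hg⟩
  obtain rfl : y = G.cob g := funext hg
  have hx := two_mul_sum_mul_inflow x g
  have hx' := two_mul_sum_mul_inflow x' g
  rw [h] at hx
  rw [qform_one, qform_one]
  linarith

def cutOfSet (R : Finset (Fin G.nV)) : Fin G.nE → ℚ :=
  G.cob fun v => if v ∈ R then 1 else 0

lemma two_mul_sum_inflow_sub_card (x : Fin G.nE → ℚ) (R : Finset (Fin G.nV)) :
    2 * (∑ v ∈ R, G.inflow x v - #{e | G.hd e ∈ R ∧ G.tl e ∈ R})
      = qform (1 : Matrix (Fin G.nE) (Fin G.nE) ℤ) x (G.cutOfSet R)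
        + qform (1 : Matrix (Fin G.nE) (Fin G.nE) ℤ) (G.cutOfSet R) (G.cutOfSet R) := by
  have h := two_mul_sum_mul_inflow x fun v => if v ∈ R then 1 else 0
  simp only [ite_mul, one_mul, zero_mul, ← sum_filter, filter_mem_eq_inter, univ_inter] at h
  rw [mul_sub, h, qform_one, qform_one, card_filter]
  push_cast
  rw [mul_sum, add_sub_assoc, ← sum_sub_distrib, ← sum_add_distrib, ← sum_add_distrib]
  refine sum_congr rfl fun e _ => ?_
  simp only [cutOfSet, cob, ite_and]
  split_ifs <;> ring

lemma inflow_orientation {o : Fin G.nE → Fin G.nV} (ho : ∀ e, o e = G.hd e ∨ o e = G.tl e)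
    (v : Fin G.nV) :
    G.inflow (fun e => if o e = G.hd e then 1 else -1) v = #{e | o e = v} := by
  rw [inflow, card_filter]
  push_cast
  refine sum_congr rfl fun e _ => ?_
  by_cases h : o e = G.hd e
  · simp [h]
  · obtain h' := (ho e).resolve_left h
    rw [h'] at h ⊢
    rw [if_neg h]
    split_ifs <;> norm_num

lemma exists_nat_eq_sum_inflow_sub_card {χ : Fin G.nE → ℚ}
    (hχ : χ ∈ CharOf (1 : Matrix (Fin G.nE) (Fin G.nE) ℤ) G.cutSet)
    (hshort : ∀ y ∈ G.cutSet, 0 ≤ qform (1 : Matrix (Fin G.nE) (Fin G.nE) ℤ) χ y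
      + qform (1 : Matrix (Fin G.nE) (Fin G.nE) ℤ) y y) (R : Finset (Fin G.nV)) :
    ∃ k : ℕ, ∑ v ∈ R, G.inflow χ v - #{e | G.hd e ∈ R ∧ G.tl e ∈ R} = k := by
  have hy : G.cutOfSet R ∈ G.cutSet :=
    cob_mem_cutSet fun v => ⟨if v ∈ R then 1 else 0, by split_ifs <;> simp⟩
  obtain ⟨m, hm⟩ := CharOf.exists_add_eq_two_mul integralOn_cutSet hχ hy
  have h := two_mul_sum_inflow_sub_card χ R
  have hm0 : 0 ≤ m := Int.cast_nonneg_iff.1 (by linarith [hshort _ hy] : (0 : ℚ) ≤ m)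
  refine ⟨m.toNat, ?_⟩
  rw [show ((m.toNat : ℕ) : ℚ) = m by exact_mod_cast Int.toNat_of_nonneg hm0]
  linarith

lemma exists_sign_inflow_eq {χ : Fin G.nE → ℚ}
    (hχ : χ ∈ CharOf (1 : Matrix (Fin G.nE) (Fin G.nE) ℤ) G.cutSet)
    (hshort : ∀ y ∈ G.cutSet, 0 ≤ qform (1 : Matrix (Fin G.nE) (Fin G.nE) ℤ) χ y
      + qform (1 : Matrix (Fin G.nE) (Fin G.nE) ℤ) y y) :
    ∃ s : Fin G.nE → ℚ, (∀ e, s e = 1 ∨ s e = -1) ∧ G.inflow s = G.inflow χ := by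
  choose k hk using exists_nat_eq_sum_inflow_sub_card hχ hshort
  have hinflow : ∀ v, G.inflow χ v = k {v} := fun v => by
    have hloop : #{e | G.hd e = v ∧ G.tl e = v} = 0 := by
      simp only [card_eq_zero, filter_eq_empty_iff]
      exact fun e _ h => G.loopless e (h.1.trans h.2.symm)
    simpa [hloop] using hk {v}
  have hsum : ∑ v, k {v} = Fintype.card (Fin G.nE) := by
    have := sum_inflow χ
    simp only [hinflow] at this
    rw [Fintype.card_fin]
    exact_mod_cast this
  have hhall : ∀ R : Finset (Fin G.nV), #{e | G.hd e ∈ R ∧ G.tl e ∈ R} ≤ ∑ v ∈ R, k {v} := by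
    intro R
    have : ((#{e | G.hd e ∈ R ∧ G.tl e ∈ R} : ℕ) : ℚ) ≤ ∑ v ∈ R, (k {v} : ℚ) := by
      simp only [← hinflow]
      linarith [hk R, (k R).cast_nonneg (α := ℚ)]
    exact_mod_cast this
  obtain ⟨o, ho, hdeg⟩ := exists_orientation_inDegree_eq G.hd G.tl (fun v => k {v}) hsum hhall
  refine ⟨fun e => if o e = G.hd e then 1 else -1,
    fun e => by by_cases h : o e = G.hd e <;> simp [h], funext fun v => ?_⟩
  rw [inflow_orientation ho, hdeg, hinflow]

end MultiGraph

/-- a characteristic covector of the cut lattice of a graph is short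
if and only if it is the restriction of `χ_𝒪` for some orientation `𝒪` of `G`,
i.e. of a vector with all coordinates `±1`. -/
theorem stmt_18 (G : MultiGraph) (χ : Fin G.nE → ℚ)
    (hχ : χ ∈ CharOf (1 : Matrix (Fin G.nE) (Fin G.nE) ℤ) G.cutSet) :
    χ ∈ ShortOf (1 : Matrix (Fin G.nE) (Fin G.nE) ℤ) G.cutSet ↔
      ∃ s : Fin G.nE → ℚ, (∀ e, s e = 1 ∨ s e = -1) ∧
        ∀ y ∈ G.cutSet, qform (1 : Matrix (Fin G.nE) (Fin G.nE) ℤ) χ y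
          = qform (1 : Matrix (Fin G.nE) (Fin G.nE) ℤ) s y := by
  rw [mem_ShortOf_iff isSymm_one MultiGraph.integralOn_cutSet hχ]
  constructor
  · intro hshort
    obtain ⟨s, hs, hflow⟩ := MultiGraph.exists_sign_inflow_eq hχ hshort
    exact ⟨s, hs, MultiGraph.qform_one_eq_of_inflow_eq hflow.symm⟩
  · rintro ⟨s, hs, hχs⟩ y hy
    rw [hχs y hy]
    exact qform_one_sign_add_self_nonneg hs hy.1

end Greene
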